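/- Let ρ ∈ H be nonzero and suppose ‖qAρ + pBρ‖ = ‖ρ‖. Then Aρ = Bρ and ‖Aρ‖ = ‖Bρ‖ = ‖ρ‖. -/

import Mathlib

/-! Since `‖A‖, ‖B‖ ≤ 1`, the vectors `Aρ` and `Bρ` lie in the closed ball of radius `‖ρ‖`, and
`qAρ + pBρ` is a proper convex combination of them lying on its boundary sphere. An inner product space is
strictly convex, so this forces `Aρ = Bρ`; the combination is then `Aρ` itself, of norm `‖ρ‖`. -/

theorem eq_of_norm_combo_eq {E : Type*} [NormedAddCommGroup E] [NormedSpace ℝ E]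
    [StrictConvexSpace ℝ E] {x y : E} {a b r : ℝ} (hx : ‖x‖ ≤ r) (hy : ‖y‖ ≤ r)
    (ha : 0 < a) (hb : 0 < b) (hab : a + b = 1) (h : ‖a • x + b • y‖ = r) : x = y := by
  by_contra hne
  exact (norm_combo_lt_of_ne hx hy hne ha hb hab).ne h

theorem ContinuousLinearMap.norm_apply_le_of_norm_le_one {𝕜 E F : Type*}
    [NontriviallyNormedField 𝕜] [SeminormedAddCommGroup E] [SeminormedAddCommGroup F]
    [NormedSpace 𝕜 E] [NormedSpace 𝕜 F] {T : E →L[𝕜] F} (hT : ‖T‖ ≤ 1) (x : E) :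
    ‖T x‖ ≤ ‖x‖ :=
  (T.le_of_opNorm_le hT x).trans_eq (one_mul _)

theorem stmt4_general {H : Type*} [NormedAddCommGroup H] [InnerProductSpace ℂ H]
    (A B : H →L[ℂ] H) (hA : ‖A‖ ≤ 1) (hB : ‖B‖ ≤ 1)
    (p q : ℝ) (hp : 0 < p) (hp1 : p < 1) (hq : q = 1 - p)
    (ρ : H)
    (h : ‖(q : ℂ) • A ρ + (p : ℂ) • B ρ‖ = ‖ρ‖) :
    A ρ = B ρ ∧ ‖A ρ‖ = ‖ρ‖ ∧ ‖B ρ‖ = ‖ρ‖ := by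
  -- the underlying real inner product provides `StrictConvexSpace ℝ H`
  let _ : InnerProductSpace ℝ H := InnerProductSpace.rclikeToReal ℂ H
  rw [Complex.coe_smul, Complex.coe_smul] at h
  have hAB : A ρ = B ρ :=
    eq_of_norm_combo_eq (A.norm_apply_le_of_norm_le_one hA ρ) (B.norm_apply_le_of_norm_le_one hB ρ)
      (by linarith) hp (by linarith) h
  have hAρ : ‖A ρ‖ = ‖ρ‖ := by
    rwa [← hAB, ← add_smul, hq, sub_add_cancel, one_smul] at h
  exact ⟨hAB, hAρ, hAB ▸ hAρ⟩

/-- Let `H` be a complex inner product space, `A, B` bounded operators with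
`‖A‖ ≤ 1`, `‖B‖ ≤ 1`, `0 < p < 1`, `q = 1 - p`.  If `ρ ≠ 0` and `‖q A ρ + p B ρ‖ = ‖ρ‖`,
then `A ρ = B ρ` and `‖A ρ‖ = ‖B ρ‖ = ‖ρ‖`. -/
theorem stmt4 {H : Type*} [NormedAddCommGroup H] [InnerProductSpace ℂ H]
    (A B : H →L[ℂ] H) (hA : ‖A‖ ≤ 1) (hB : ‖B‖ ≤ 1)
    (p q : ℝ) (hp : 0 < p) (hp1 : p < 1) (hq : q = 1 - p)
    (ρ : H) (hρ : ρ ≠ 0)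
    (h : ‖(q : ℂ) • A ρ + (p : ℂ) • B ρ‖ = ‖ρ‖) :
    A ρ = B ρ ∧ ‖A ρ‖ = ‖ρ‖ ∧ ‖B ρ‖ = ‖ρ‖ :=
  stmt4_general A B hA hB p q hp hp1 hq ρ h
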